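/- Let μ be a probability measure on ℝ with bounded support, let M = ess sup of the identity under μ, and assume μ({x : x > M - ε}) > 0 for all ε > 0. Define the tilted measures μ_k(A) = ∫_A e^{kx} dμ / ∫ e^{kx} dμ. Then the mean of μ_k converges to M and the variance of μ_k converges to 0 as k → ∞. -/

import Mathlib

/-!
Tilting by `e^{kx}` multiplies the mass of `(-∞, a]` by at most `e^{ka}`, while the normalising
constant is at least `e^{kb} μ(b, ∞)`; for `a < b` the tilted probability of `(-∞, a]` therefore
decays like `e^{-k(b - a)}`. As all tilted measures live on `[-C, M]`, the integral of any
continuous function against them tends to its value at `M`: for `x` and `x²` this is the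
convergence of the mean to `M` and of the variance to `M² - M² = 0`.
-/

open MeasureTheory Filter Set Real Topology

theorem integrable_exp_mul_of_ae_abs_le {μ : Measure ℝ} [IsFiniteMeasure μ] {C : ℝ}
    (hbdd : ∀ᵐ x ∂μ, |x| ≤ C) (k : ℝ) : Integrable (fun x => exp (k * x)) μ := by
  refine .of_bound (by fun_prop) (exp (|k| * C)) ?_
  filter_upwards [hbdd] with x hx
  rw [norm_of_nonneg (exp_pos _).le, exp_le_exp]
  calc k * x ≤ |k * x| := le_abs_self _
    _ = |k| * |x| := abs_mul k x
    _ ≤ |k| * C := mul_le_mul_of_nonneg_left hx (abs_nonneg k)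

theorem measureReal_tilted {α : Type*} [MeasurableSpace α] (μ : Measure α) [SFinite μ]
    (f : α → ℝ) (s : Set α) :
    (μ.tilted f).real s = (∫ x in s, exp (f x) ∂μ) / ∫ x, exp (f x) ∂μ := by
  rw [measureReal_def, tilted_apply_eq_ofReal_integral, integral_div,
    ENNReal.toReal_ofReal (div_nonneg (integral_nonneg fun _ => (exp_pos _).le)
      (integral_nonneg fun _ => (exp_pos _).le))]

theorem integral_tilted_eq_div {α : Type*} [MeasurableSpace α] (μ : Measure α)
    (f g : α → ℝ) :
    ∫ x, g x ∂μ.tilted f = (∫ x, g x * exp (f x) ∂μ) / ∫ x, exp (f x) ∂μ := by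
  rw [integral_tilted, ← integral_div]
  congr with x
  rw [smul_eq_mul]
  ring

theorem measureReal_tilted_mul_Iic_le {μ : Measure ℝ} [IsFiniteMeasure μ] {k : ℝ} (hk : 0 ≤ k)
    (hint : Integrable (fun x => exp (k * x)) μ) (a : ℝ) {b : ℝ} (hb : 0 < μ (Ioi b)) :
    (μ.tilted (k * ·)).real (Iic a) ≤ exp (-(k * (b - a))) * μ.real univ / μ.real (Ioi b) := by
  have hnum : ∫ x in Iic a, exp (k * x) ∂μ ≤ exp (k * a) * μ.real univ := by
    calc ∫ x in Iic a, exp (k * x) ∂μ ≤ ∫ _ in Iic a, exp (k * a) ∂μ :=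
          setIntegral_mono_on hint.integrableOn (integrableOn_const (measure_ne_top _ _))
            measurableSet_Iic fun x hx => exp_le_exp.2 (mul_le_mul_of_nonneg_left hx hk)
      _ ≤ exp (k * a) * μ.real univ := by
          rw [setIntegral_const, smul_eq_mul, mul_comm]
          exact mul_le_mul_of_nonneg_left (measureReal_mono (subset_univ _)) (exp_pos _).le
  have hden : exp (k * b) * μ.real (Ioi b) ≤ ∫ x, exp (k * x) ∂μ :=
    (setIntegral_ge_of_const_le_real measurableSet_Ioi (measure_ne_top _ _)
      (fun x hx => exp_le_exp.2 (mul_le_mul_of_nonneg_left (le_of_lt hx) hk))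
      hint.integrableOn).trans
      (setIntegral_le_integral hint (Eventually.of_forall fun _ => (exp_pos _).le))
  have hb' : 0 < μ.real (Ioi b) := ENNReal.toReal_pos hb.ne' (measure_ne_top _ _)
  calc (μ.tilted (k * ·)).real (Iic a)
      ≤ exp (k * a) * μ.real univ / (exp (k * b) * μ.real (Ioi b)) := by
        rw [measureReal_tilted]
        exact div_le_div₀ (by positivity) hnum (by positivity) hden
    _ = exp (-(k * (b - a))) * μ.real univ / μ.real (Ioi b) := by
        rw [show -(k * (b - a)) = k * a - k * b by ring, exp_sub]
        field_simp

theorem tendsto_measureReal_tilted_mul_Iic {μ : Measure ℝ} [IsFiniteMeasure μ] {a b : ℝ}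
    (hab : a < b) (hb : 0 < μ (Ioi b)) (hint : ∀ k, Integrable (fun x => exp (k * x)) μ) :
    Tendsto (fun k : ℝ => (μ.tilted (k * ·)).real (Iic a)) atTop (𝓝 0) := by
  have hdecay : Tendsto (fun k : ℝ => exp (-(k * (b - a))) * μ.real univ / μ.real (Ioi b))
      atTop (𝓝 0) := by
    have := tendsto_exp_neg_atTop_nhds_zero.comp
      (tendsto_id.atTop_mul_const (sub_pos.2 hab))
    simpa using (this.mul_const (μ.real univ)).div_const (μ.real (Ioi b))
  refine tendsto_of_tendsto_of_tendsto_of_le_of_le' tendsto_const_nhds hdecay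
    (Eventually.of_forall fun _ => measureReal_nonneg) ?_
  filter_upwards [eventually_ge_atTop 0] with k hk
  exact measureReal_tilted_mul_Iic_le hk (hint k) a hb

theorem abs_integral_sub_le_of_ae_mem_Icc {ν : Measure ℝ} [IsProbabilityMeasure ν]
    {a M ε η B : ℝ} {g : ℝ → ℝ} (hg : Continuous g) (hsupp : ∀ᵐ x ∂ν, x ∈ Icc a M)
    (hη : 0 ≤ η) (hnear : ∀ x ∈ Ioc (M - ε) M, |g x - g M| ≤ η)
    (hfar : ∀ x ∈ Icc a M, |g x - g M| ≤ B) :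
    |∫ x, g x ∂ν - g M| ≤ η + B * ν.real (Iic (M - ε)) := by
  have hgint : Integrable g ν := by
    refine .of_bound hg.aestronglyMeasurable (|g M| + B) ?_
    filter_upwards [hsupp] with x hx
    have := hfar x hx
    rw [norm_eq_abs]
    linarith [abs_sub_abs_le_abs_sub (g x) (g M)]
  have hint : Integrable (fun x => g x - g M) ν := hgint.sub (integrable_const _)
  have hind : Integrable ((Iic (M - ε)).indicator (1 : ℝ → ℝ)) ν :=
    (integrable_const (1 : ℝ)).indicator measurableSet_Iic
  have hbound : ∀ᵐ x ∂ν, |g x - g M| ≤ η + B * (Iic (M - ε)).indicator 1 x := by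
    filter_upwards [hsupp] with x hx
    by_cases hxε : x ≤ M - ε
    · rw [indicator_of_mem (mem_Iic.2 hxε), Pi.one_apply, mul_one]
      linarith [hfar x hx]
    · rw [indicator_of_notMem (notMem_Iic.2 (not_le.1 hxε)), mul_zero, add_zero]
      exact hnear x ⟨not_le.1 hxε, hx.2⟩
  calc |∫ x, g x ∂ν - g M| = |∫ x, (g x - g M) ∂ν| := by
        simp [integral_sub hgint (integrable_const _)]
    _ ≤ ∫ x, |g x - g M| ∂ν := abs_integral_le_integral_abs
    _ ≤ ∫ x, (η + B * (Iic (M - ε)).indicator 1 x) ∂ν :=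
        integral_mono_ae hint.abs ((integrable_const η).add (hind.const_mul B)) hbound
    _ = η + B * ν.real (Iic (M - ε)) := by
        rw [integral_add (integrable_const η) (hind.const_mul B), integral_const_mul,
          integral_indicator_one measurableSet_Iic]
        simp

theorem tendsto_integral_of_tendsto_measureReal_Iic {ι : Type*} {l : Filter ι}
    {ν : ι → Measure ℝ} [∀ i, IsProbabilityMeasure (ν i)] {a M : ℝ}
    (hsupp : ∀ i, ∀ᵐ x ∂ν i, x ∈ Icc a M)
    (hconc : ∀ ε > 0, Tendsto (fun i => (ν i).real (Iic (M - ε))) l (𝓝 0))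
    {g : ℝ → ℝ} (hg : Continuous g) :
    Tendsto (fun i => ∫ x, g x ∂ν i) l (𝓝 (g M)) := by
  obtain ⟨B, hB⟩ := (isCompact_Icc (a := a) (b := M)).exists_bound_of_continuousOn
    (f := fun x => g x - g M) (hg.sub continuous_const).continuousOn
  rw [Metric.tendsto_nhds]
  intro δ hδ
  obtain ⟨ε, hε, hnear⟩ := Metric.continuous_iff.1 hg M (δ / 2) (half_pos hδ)
  have hlim : Tendsto (fun i => δ / 2 + B * (ν i).real (Iic (M - ε))) l (𝓝 (δ / 2 + B * 0)) :=
    ((hconc ε hε).const_mul B).const_add _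
  filter_upwards [hlim.eventually (gt_mem_nhds (show δ / 2 + B * 0 < δ by linarith))] with i hi
  refine lt_of_le_of_lt ?_ hi
  refine abs_integral_sub_le_of_ae_mem_Icc hg (hsupp i) (half_pos hδ).le (fun x hx => ?_)
    (fun x hx => hB x hx)
  have hx' : dist x M < ε := by
    rw [dist_eq, abs_lt]
    constructor <;> linarith [hx.1, hx.2]
  exact (hnear x hx').le

/-- Exponential tilting concentrates a compactly supported measure at its essential
supremum `M`: the means of the tilted measures `μ_k(dx) ∝ e^{kx} μ(dx)` converge to
`M` and their variances converge to `0`. -/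
theorem exponential_tilting_concentrates (μ : Measure ℝ) [IsProbabilityMeasure μ]
    (C : ℝ) (hbdd : ∀ᵐ x ∂μ, |x| ≤ C)
    (M : ℝ) (hM : M = essSup id μ)
    (hmass : ∀ ε > 0, 0 < μ {x | M - ε < x}) :
    Tendsto (fun k : ℕ =>
        (∫ x, x * Real.exp ((k : ℝ) * x) ∂μ) / ∫ x, Real.exp ((k : ℝ) * x) ∂μ)
      atTop (nhds M) ∧
    Tendsto (fun k : ℕ =>
        (∫ x, x ^ 2 * Real.exp ((k : ℝ) * x) ∂μ) / (∫ x, Real.exp ((k : ℝ) * x) ∂μ) -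
          ((∫ x, x * Real.exp ((k : ℝ) * x) ∂μ) / ∫ x, Real.exp ((k : ℝ) * x) ∂μ) ^ 2)
      atTop (nhds 0) := by
  have hint := integrable_exp_mul_of_ae_abs_le hbdd
  have hle : ∀ᵐ x ∂μ, x ≤ M := hM ▸ ae_le_essSup
    ⟨C, by filter_upwards [hbdd] with x hx using (le_abs_self x).trans hx⟩
  set ν : ℕ → Measure ℝ := fun k => μ.tilted ((k : ℝ) * ·)
  have : ∀ k, IsProbabilityMeasure (ν k) := fun k => isProbabilityMeasure_tilted (hint k)
  have hsupp : ∀ k, ∀ᵐ x ∂ν k, x ∈ Icc (-C) M := fun k =>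
    (tilted_absolutelyContinuous μ _).ae_le <| by
      filter_upwards [hbdd, hle] with x hx hxM using ⟨neg_le_of_abs_le hx, hxM⟩
  have hconc : ∀ ε > 0, Tendsto (fun k => (ν k).real (Iic (M - ε))) atTop (𝓝 0) := fun ε hε =>
    (tendsto_measureReal_tilted_mul_Iic (by linarith) (hmass (ε / 2) (half_pos hε)) hint).comp
      tendsto_natCast_atTop_atTop
  have hmean := tendsto_integral_of_tendsto_measureReal_Iic hsupp hconc continuous_id
  have hsecond := tendsto_integral_of_tendsto_measureReal_Iic hsupp hconc (continuous_pow 2)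
  simp only [ν, integral_tilted_eq_div, id] at hmean hsecond
  refine ⟨hmean, ?_⟩
  simpa using hsecond.sub (hmean.pow 2)
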